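/- arXiv:2302.07329 — 6 statements merged into one kernel-verified Lean document; each statement's English description precedes it below -/
import Mathlib

section
/- Let A ⊆ A' be an extension of commutative rings such that every element a' ∈ A' lies in some subring of A' of the form A[a₁, …, aₙ], where for each i ∈ {1, …, n} either (a) aᵢ², aᵢ³ ∈ A[a₁, …, aᵢ₋₁], or (b) there exists a prime number p with aᵢ^p ∈ A[a₁, …, aᵢ₋₁] and p·aᵢ ∈ A[a₁, …, aᵢ₋₁]. Let B ⊆ C be an extension of commutative rings such that B is weakly normal in C, and let φ : A' → C be a ring homomorphism with φ(A) ⊆ B. Then φ(A') ⊆ B; that is, φ factors through the inclusion B ⊆ C. -/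
lemma closure_maps {A' C : Type*} [CommRing A'] [CommRing C] (φ : A' →+* C)
    (B : Subring C) (S : Set A') (hS : ∀ s ∈ S, φ s ∈ B) :
    ∀ x ∈ Subring.closure S, φ x ∈ B := by
  intro x hx
  have : Subring.closure S ≤ B.comap φ := Subring.closure_le.mpr hS
  exact this hx

/-- Let `A ⊆ A'` be an extension of commutative rings satisfying the
tower condition characterizing universal homeomorphisms (Stacks 0CNE): every `a' ∈ A'`
lies in some `A[a₁, …, aₙ] ⊆ A'` where each `aᵢ` satisfies `aᵢ², aᵢ³ ∈ A[a₁, …, aᵢ₋₁]`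
or `aᵢ^p, p·aᵢ ∈ A[a₁, …, aᵢ₋₁]` for some prime `p`. Let `B ⊆ C` be weakly normal and
let `φ : A' → C` be a ring homomorphism with `φ(A) ⊆ B`. Then `φ(A') ⊆ B`. -/
theorem weaklyNormal_factorization {A' : Type*} [CommRing A'] (A : Subring A')
    (hA : ∀ a' : A', ∃ (n : ℕ) (a : Fin n → A'),
      a' ∈ Subring.closure ((A : Set A') ∪ Set.range a) ∧
      (∀ i : Fin n,
        (a i ^ 2 ∈ Subring.closure ((A : Set A') ∪ a '' {j : Fin n | (j : ℕ) < (i : ℕ)}) ∧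
         a i ^ 3 ∈ Subring.closure ((A : Set A') ∪ a '' {j : Fin n | (j : ℕ) < (i : ℕ)})) ∨
        (∃ p : ℕ, p.Prime ∧
         a i ^ p ∈ Subring.closure ((A : Set A') ∪ a '' {j : Fin n | (j : ℕ) < (i : ℕ)}) ∧
         (p : A') * a i ∈ Subring.closure ((A : Set A') ∪ a '' {j : Fin n | (j : ℕ) < (i : ℕ)}))))
    {C : Type*} [CommRing C] (B : Subring C)
    (hwn : ∀ x : C,
      ((x ^ 2 ∈ B ∧ x ^ 3 ∈ B) → x ∈ B) ∧
      (∀ p : ℕ, p.Prime → (x ^ p ∈ B ∧ (p : C) * x ∈ B) → x ∈ B))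
    (φ : A' →+* C) (hφ : ∀ x ∈ A, φ x ∈ B) :
    ∀ y : A', φ y ∈ B := by
  intro y
  obtain ⟨n, a, hy, hstep⟩ := hA y
  -- strong induction: φ (a i) ∈ B for all i
  have key : ∀ m : ℕ, ∀ i : Fin n, (i : ℕ) < m → φ (a i) ∈ B := by
    intro m
    induction m with
    | zero => intro i hi; omega
    | succ m ih =>
      intro i hi
      rcases lt_or_ge (i : ℕ) m with h | h
      · exact ih i h
      have him : (i : ℕ) = m := by omega
      have hgen : ∀ s ∈ (A : Set A') ∪ a '' {j : Fin n | (j : ℕ) < (i : ℕ)}, φ s ∈ B := by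
        rintro s (hs | ⟨j, hj, rfl⟩)
        · exact hφ s hs
        · exact ih j (him ▸ hj)
      rcases hstep i with ⟨h2, h3⟩ | ⟨p, hp, hpow, hmul⟩
      · refine (hwn (φ (a i))).1 ⟨?_, ?_⟩
        · have := closure_maps φ B _ hgen _ h2
          simpa using this
        · have := closure_maps φ B _ hgen _ h3
          simpa using this
      · refine (hwn (φ (a i))).2 p hp ⟨?_, ?_⟩
        · have := closure_maps φ B _ hgen _ hpow
          simpa using this
        · have := closure_maps φ B _ hgen _ hmul
          simpa using this
  refine closure_maps φ B _ ?_ _ hy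
  rintro s (hs | ⟨i, rfl⟩)
  · exact hφ s hs
  · exact key n i i.isLt
end

section
/- Let A ⊆ A' be an extension of commutative rings such that every element a' ∈ A' lies in some subring of A' of the form A[a₁, …, aₙ], where for each i ∈ {1, …, n} one has aᵢ², aᵢ³ ∈ A[a₁, …, aᵢ₋₁]. Let B ⊆ C be an extension of commutative rings such that B is seminormal in C, and let φ : A' → C be a ring homomorphism with φ(A) ⊆ B. Then φ(A') ⊆ B; that is, φ factors through the inclusion B ⊆ C. -/
/-- Let `A ⊆ A'` be an extension of commutative rings such that every
`a' ∈ A'` lies in some `A[a₁, …, aₙ] ⊆ A'` where each `aᵢ` satisfies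
`aᵢ², aᵢ³ ∈ A[a₁, …, aᵢ₋₁]`. Let `B ⊆ C` be seminormal (i.e. `x² ∈ B` and `x³ ∈ B`
imply `x ∈ B`) and let `φ : A' → C` be a ring homomorphism with `φ(A) ⊆ B`.
Then `φ(A') ⊆ B`. -/
theorem seminormal_factorization {A' : Type*} [CommRing A'] (A : Subring A')
    (hA : ∀ a' : A', ∃ (n : ℕ) (a : Fin n → A'),
      a' ∈ Subring.closure ((A : Set A') ∪ Set.range a) ∧
      (∀ i : Fin n,
        a i ^ 2 ∈ Subring.closure ((A : Set A') ∪ a '' {j : Fin n | (j : ℕ) < (i : ℕ)}) ∧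
        a i ^ 3 ∈ Subring.closure ((A : Set A') ∪ a '' {j : Fin n | (j : ℕ) < (i : ℕ)})))
    {C : Type*} [CommRing C] (B : Subring C)
    (hsn : ∀ x : C, (x ^ 2 ∈ B ∧ x ^ 3 ∈ B) → x ∈ B)
    (φ : A' →+* C) (hφ : ∀ x ∈ A, φ x ∈ B) :
    ∀ y : A', φ y ∈ B := by
  intro y
  obtain ⟨n, a, hy, hstep⟩ := hA y
  have key : ∀ i : Fin n, φ (a i) ∈ B := by
    intro i
    induction' hi : (i : ℕ) using Nat.strong_induction_on with k ih generalizing i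
    subst hi
    have hsub : Subring.closure ((A : Set A') ∪ a '' {j : Fin n | (j : ℕ) < (i : ℕ)})
        ≤ B.comap φ := by
      apply Subring.closure_le.2
      rintro x (hx | ⟨j, hj, rfl⟩)
      · exact hφ x hx
      · exact ih _ hj j rfl
    refine hsn _ ⟨?_, ?_⟩
    · simpa [map_pow] using hsub (hstep i).1
    · simpa [map_pow] using hsub (hstep i).2
  have : Subring.closure ((A : Set A') ∪ Set.range a) ≤ B.comap φ := by
    apply Subring.closure_le.2
    rintro x (hx | ⟨j, rfl⟩)
    · exact hφ x hx
    · exact key j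
  exact this hy
end

section
/- Let R' be a commutative ring equipped with an ℕ-grading 𝒜, i.e., R' is the internal direct sum of additive subgroups 𝒜₀, 𝒜₁, 𝒜₂, … with 1 ∈ 𝒜₀ and 𝒜_d · 𝒜_e ⊆ 𝒜_{d+e} for all d, e. Let R ⊆ R' be a subring and N ∈ ℕ such that 𝒜₀ ⊆ R and 𝒜_d ⊆ R for every d ≥ N. Then R' is integral over R, i.e., every element of R' satisfies a monic polynomial with coefficients in R. -/
/-- Let `R'` be a commutative ring with an ℕ-grading `𝒜` (internal
direct sum of additive subgroups with `1 ∈ 𝒜 0` and `𝒜 d * 𝒜 e ⊆ 𝒜 (d+e)`). Let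
`R ⊆ R'` be a subring and `N : ℕ` with `𝒜 0 ⊆ R` and `𝒜 d ⊆ R` for all `d ≥ N`.
Then `R'` is integral over `R`: every element of `R'` is a root of a monic polynomial
with coefficients in `R`. -/
theorem graded_eventually_agree_integral {R' : Type*} [CommRing R']
    (𝒜 : ℕ → AddSubgroup R') [GradedRing 𝒜]
    (R : Subring R') (N : ℕ)
    (h0 : (𝒜 0 : Set R') ⊆ R)
    (hN : ∀ d : ℕ, N ≤ d → (𝒜 d : Set R') ⊆ R) :
    ∀ x : R', R.subtype.IsIntegralElem x := by
  classical
  have key : ∀ x : R', IsIntegral R x := by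
    intro x
    rw [← DirectSum.sum_support_decompose 𝒜 x]
    apply IsIntegral.sum
    intro d _
    set y : R' := (DirectSum.decompose 𝒜 x d : R') with hy_def
    have hy : y ∈ 𝒜 d := SetLike.coe_mem _
    by_cases hdR : y ∈ R
    · exact isIntegral_algebraMap (x := (⟨y, hdR⟩ : R))
    · have hd0 : d ≠ 0 := fun h => hdR (h0 (h ▸ hy))
      have hN0 : N ≠ 0 := fun h => hdR (hN d (h ▸ Nat.zero_le d) hy)
      have hpow : y ^ N ∈ 𝒜 (N * d) := SetLike.pow_mem_graded N hy
      have hle : N ≤ N * d := Nat.le_mul_of_pos_right N (Nat.pos_of_ne_zero hd0)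
      have hpowR : y ^ N ∈ R := hN (N * d) hle hpow
      refine ⟨Polynomial.X ^ N - Polynomial.C (⟨y ^ N, hpowR⟩ : R),
        Polynomial.monic_X_pow_sub_C _ hN0, ?_⟩
      simp [Polynomial.eval₂_sub, Polynomial.eval₂_pow]
      exact sub_self _
  intro x
  exact key x
end

section
/- Let R' be a commutative ring equipped with an ℕ-grading 𝒜, i.e., R' is the internal direct sum of additive subgroups 𝒜₀, 𝒜₁, 𝒜₂, … with 1 ∈ 𝒜₀ and 𝒜_d · 𝒜_e ⊆ 𝒜_{d+e} for all d, e. Let R ⊆ R' be a subring and N ∈ ℕ such that 𝒜_d ⊆ R for every d ≥ N. Then for every homogeneous element f ∈ 𝒜_d with d ≥ N (note f ∈ R) and every s ∈ R', one has f·s ∈ R. -/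
/-- Let `R'` be a commutative ring with an ℕ-grading `𝒜`. Let
`R ⊆ R'` be a subring and `N : ℕ` with `𝒜 d ⊆ R` for all `d ≥ N`. Then for every
homogeneous element `f ∈ 𝒜 d` with `d ≥ N` and every `s : R'`, we have `f * s ∈ R`. -/
theorem graded_eventually_agree_mul_mem {R' : Type*} [CommRing R']
    (𝒜 : ℕ → AddSubgroup R') [GradedRing 𝒜]
    (R : Subring R') (N : ℕ)
    (hN : ∀ d : ℕ, N ≤ d → (𝒜 d : Set R') ⊆ R)
    (d : ℕ) (hd : N ≤ d) (f : R') (hf : f ∈ 𝒜 d) :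
    ∀ s : R', f * s ∈ R := by
  intro s
  classical
  have := DirectSum.sum_support_decompose 𝒜 s
  rw [← this, Finset.mul_sum]
  apply Subring.sum_mem
  intro e _
  exact hN (d + e) (hd.trans (Nat.le_add_right d e))
    (SetLike.mul_mem_graded hf (DirectSum.decompose 𝒜 s e).2)
end

section
/- Let R' be a commutative ring equipped with an ℕ-grading 𝒜, i.e., R' is the internal direct sum of additive subgroups 𝒜₀, 𝒜₁, 𝒜₂, … with 1 ∈ 𝒜₀ and 𝒜_d · 𝒜_e ⊆ 𝒜_{d+e} for all d, e. Let R ⊆ R' be a subring and N ∈ ℕ such that 𝒜_d ⊆ R for every d ≥ N. Let f ∈ 𝒜_d be a homogeneous element with d ≥ N (so f ∈ R). Then the inclusion R ⊆ R' induces a bijective ring homomorphism between the localizations of R and of R' away from f; i.e., the induced map R[f⁻¹] → R'[f⁻¹] is an isomorphism. -/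
/-- Let `R'` be a commutative ring with an ℕ-grading `𝒜`, `R ⊆ R'` a
subring and `N : ℕ` with `𝒜 d ⊆ R` for all `d ≥ N`. Let `f ∈ 𝒜 d` be homogeneous of
degree `d ≥ N` (so `f ∈ R`). Then the inclusion `R ⊆ R'` induces an isomorphism
`R[f⁻¹] ≅ R'[f⁻¹]`, i.e. the induced ring homomorphism of localizations away from `f`
is bijective. -/
theorem graded_eventually_agree_localization_iso {R' : Type*} [CommRing R']
    (𝒜 : ℕ → AddSubgroup R') [GradedRing 𝒜]
    (R : Subring R') (N : ℕ)
    (hN : ∀ d : ℕ, N ≤ d → (𝒜 d : Set R') ⊆ R)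
    (d : ℕ) (hd : N ≤ d) (f : R') (hf : f ∈ 𝒜 d) (hfR : f ∈ R) :
    Function.Bijective (Localization.awayMap R.subtype (⟨f, hfR⟩ : R)) := by
  classical
  set fR : R := ⟨f, hfR⟩ with hfRdef
  -- every element of R' becomes an element of R after multiplying by f
  have key : ∀ x : R', x * f ∈ R := by
    intro x
    rw [← DirectSum.sum_support_decompose 𝒜 x, Finset.sum_mul]
    refine Subring.sum_mem _ fun e _ => ?_
    exact hN (e + d) (le_trans hd (Nat.le_add_left d e))
      (SetLike.mul_mem_graded (SetLike.coe_mem _) hf)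
  letI : Algebra R (Localization.Away f) :=
    ((algebraMap R' (Localization.Away f)).comp R.subtype).toAlgebra
  have halg : (algebraMap R (Localization.Away f)) =
      (algebraMap R' (Localization.Away f)).comp R.subtype := rfl
  haveI : IsLocalization.Away fR (Localization.Away f) := by
    refine { map_units := ?_, surj := ?_, exists_of_eq := ?_ }
    · rintro ⟨y, n, rfl⟩
      have : (algebraMap R (Localization.Away f)) (fR ^ n) =
          algebraMap R' (Localization.Away f) (f ^ n) := by
        rw [halg]; simp [hfRdef]
      rw [this]
      exact IsLocalization.map_units (Localization.Away f)
        (⟨f ^ n, n, rfl⟩ : Submonoid.powers f)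
    · intro z
      obtain ⟨⟨x, s⟩, hxs⟩ := IsLocalization.surj (Submonoid.powers f) z
      obtain ⟨n, hn⟩ := s.2
      refine ⟨⟨⟨x * f, key x⟩, fR ^ (n + 1), n + 1, rfl⟩, ?_⟩
      have h1 : (algebraMap R (Localization.Away f)) (fR ^ (n + 1)) =
          algebraMap R' (Localization.Away f) (f ^ n) *
            algebraMap R' (Localization.Away f) f := by
        rw [halg]; simp [hfRdef, pow_succ]
      have h2 : (algebraMap R (Localization.Away f)) ⟨x * f, key x⟩ =
          algebraMap R' (Localization.Away f) x *
            algebraMap R' (Localization.Away f) f := by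
        rw [halg]; simp
      simp only [h1, h2, ← mul_assoc]
      rw [show (s : R') = f ^ n from hn ▸ rfl] at hxs
      rw [← hxs]
    · intro r₁ r₂ h
      rw [halg] at h
      obtain ⟨c, hc⟩ := (IsLocalization.eq_iff_exists (Submonoid.powers f)
        (Localization.Away f)).mp h
      obtain ⟨n, hn⟩ := c.2
      refine ⟨⟨fR ^ n, n, rfl⟩, ?_⟩
      apply Subtype.ext
      have : (f ^ n) * (r₁ : R') = (f ^ n) * (r₂ : R') := by
        rw [show (c : R') = f ^ n from hn ▸ rfl] at hc; exact hc
      simpa [hfRdef] using this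
  -- the away map agrees with the canonical localization equivalence
  have heq : (Localization.awayMap R.subtype fR) =
      (IsLocalization.algEquiv (Submonoid.powers fR)
        (Localization.Away fR) (Localization.Away f) : Localization.Away fR →+* Localization.Away f) := by
    apply IsLocalization.ringHom_ext (Submonoid.powers fR)
    ext x
    simp only [RingHom.comp_apply, Localization.awayMap, IsLocalization.Away.map]
    rw [IsLocalization.map_eq]
    exact ((IsLocalization.algEquiv (Submonoid.powers fR)
      (Localization.Away fR) (Localization.Away f)).commutes x).symm
  rw [heq]
  exact (IsLocalization.algEquiv (Submonoid.powers fR)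
    (Localization.Away fR) (Localization.Away f)).bijective
end

section
/- Let R' be a commutative ring equipped with an ℕ-grading 𝒜, i.e., R' is the internal direct sum of additive subgroups 𝒜₀, 𝒜₁, 𝒜₂, … with 1 ∈ 𝒜₀ and 𝒜_d · 𝒜_e ⊆ 𝒜_{d+e} for all d, e. Let R ⊆ R' be a subring and N ∈ ℕ such that 𝒜₀ ⊆ R and 𝒜_d ⊆ R for every d ≥ N. Assume moreover that for each d with 0 < d < N, the additive group 𝒜_d is finitely generated as a module over 𝒜₀ (where 𝒜₀ acts by multiplication in R'). Then R' is finitely generated as an R-module. -/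
/-- Let `R'` be a commutative ring with an ℕ-grading `𝒜`, `R ⊆ R'` a
subring and `N : ℕ` with `𝒜 0 ⊆ R` and `𝒜 d ⊆ R` for all `d ≥ N`. Assume moreover that
for each `0 < d < N` the additive group `𝒜 d` is a finitely generated module over `𝒜 0`
(i.e. there is a finite subset `s ⊆ 𝒜 d` such that every element of `𝒜 d` is a finite
sum of products `a * b` with `a ∈ 𝒜 0`, `b ∈ s`). Then `R'` is a finitely generated
`R`-module. -/
theorem graded_eventually_agree_module_finite {R' : Type*} [CommRing R']
    (𝒜 : ℕ → AddSubgroup R') [GradedRing 𝒜]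
    (R : Subring R') (N : ℕ)
    (h0 : (𝒜 0 : Set R') ⊆ R)
    (hN : ∀ d : ℕ, N ≤ d → (𝒜 d : Set R') ⊆ R)
    (hfg : ∀ d : ℕ, 0 < d → d < N → ∃ s : Finset R',
      (↑s : Set R') ⊆ (𝒜 d : Set R') ∧
      (𝒜 d : Set R') ⊆ AddSubgroup.closure {x : R' | ∃ a ∈ 𝒜 0, ∃ b ∈ s, x = a * b}) :
    Module.Finite R R' := by
  classical
  -- choose generating finsets
  set s : ℕ → Finset R' := fun d =>
    if h : 0 < d ∧ d < N then (hfg d h.1 h.2).choose else ∅ with hs_def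
  set T : Finset R' := {(1 : R')} ∪ (Finset.range N).biUnion s with hT_def
  refine ⟨⟨T, ?_⟩⟩
  rw [eq_top_iff]
  have h1T : (1 : R') ∈ Submodule.span R (T : Set R') :=
    Submodule.subset_span (by simp [hT_def])
  -- every homogeneous element lies in the span
  have key : ∀ d : ℕ, ∀ x ∈ 𝒜 d, x ∈ Submodule.span R (T : Set R') := by
    intro d x hx
    by_cases hd : 0 < d ∧ d < N
    · have hspec := (hfg d hd.1 hd.2).choose_spec
      have hsd : s d = (hfg d hd.1 hd.2).choose := by simp [hs_def, hd]
      have hx' : x ∈ AddSubgroup.closure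
          {y : R' | ∃ a ∈ 𝒜 0, ∃ b ∈ (hfg d hd.1 hd.2).choose, y = a * b} :=
        hspec.2 hx
      have hle : AddSubgroup.closure
          {y : R' | ∃ a ∈ 𝒜 0, ∃ b ∈ (hfg d hd.1 hd.2).choose, y = a * b}
          ≤ (Submodule.span R (T : Set R')).toAddSubgroup := by
        apply AddSubgroup.closure_le _ |>.mpr
        rintro y ⟨a, ha, b, hb, rfl⟩
        have hbT : b ∈ Submodule.span R (T : Set R') := by
          apply Submodule.subset_span
          simp only [hT_def, Finset.coe_union, Finset.coe_biUnion]
          right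
          exact Set.mem_biUnion (by simpa using hd.2) (by rw [hsd]; exact hb)
        have : (⟨a, h0 ha⟩ : R) • b ∈ Submodule.span R (T : Set R') :=
          Submodule.smul_mem _ _ hbT
        simpa [Subring.smul_def] using this
      exact hle hx'
    · have hxR : x ∈ R := by
        rcases Nat.eq_zero_or_pos d with h | h
        · exact h0 (h ▸ hx)
        · have : N ≤ d := by
            by_contra hlt
            exact hd ⟨h, lt_of_not_ge hlt⟩
          exact hN d this hx
      have : (⟨x, hxR⟩ : R) • (1 : R') ∈ Submodule.span R (T : Set R') :=
        Submodule.smul_mem _ _ h1T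
      simpa [Subring.smul_def] using this
  intro x _
  have hx := DirectSum.sum_support_decompose 𝒜 x
  rw [← hx]
  exact Submodule.sum_mem _ fun i _ => key i _ (SetLike.coe_mem _)
end
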